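/- arXiv:1602.00036 — 2 statements merged into one kernel-verified Lean document; each statement's English description precedes it below -/
import Mathlib

section
/- Let π and τ be involutions of {0,...,n-1} and let v, u ∈ {0,1}^n be such that for every i with v_i = 1 and every j with u_j = 1, either (i,j) = (i_0, π(i_0)) for one fixed coordinate i_0 with v_{i_0} = u_{π(i_0)} = 1 and π(i_0) ≠ i_0, or j ∉ {i, π(i), τ(i)}. Then v *_τ u = v + u, while v *_π u differs from v + u exactly in coordinates i_0 and π(i_0). In particular, the Hamming distance between v *_π u and v *_τ u equals 2. -/
/-- The `Z₂Z₄` operation `x *_σ y = x + y + (x + σ(x))·(y + σ(y))` on `(Z/2Z)^n`. -/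
def star {n : ℕ} (σ : Fin n → Fin n) (x y : Fin n → ZMod 2) : Fin n → ZMod 2 :=
  x + y + (x + x ∘ σ) * (y + y ∘ σ)

lemma star_aux {n : ℕ} (σ : Fin n → Fin n) (hσ : Function.Involutive σ)
    (v u : Fin n → ZMod 2) (j : Fin n)
    (h : ∀ a b, (a = j ∨ a = σ j) → (b = j ∨ b = σ j) → v a = 1 → u b = 1 →
      b ≠ a ∧ b ≠ σ a) :
    (v j + v (σ j)) * (u j + u (σ j)) = 0 := by
  have h2 : ∀ x : ZMod 2, x = 0 ∨ x = 1 := by decide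
  rcases h2 (v j) with hvj | hvj <;> rcases h2 (v (σ j)) with hvs | hvs <;>
    rcases h2 (u j) with huj | huj <;> rcases h2 (u (σ j)) with hus | hus <;>
    rw [hvj, hvs, huj, hus] <;>
  first
    | decide
    | exact ((h j j (Or.inl rfl) (Or.inl rfl) hvj huj).1 rfl).elim
    | exact ((h j (σ j) (Or.inl rfl) (Or.inr rfl) hvj hus).2 rfl).elim
    | exact (((h (σ j) j (Or.inr rfl) (Or.inl rfl) hvs huj).2) (hσ j).symm).elim
    | exact ((h (σ j) (σ j) (Or.inr rfl) (Or.inr rfl) hvs hus).1 rfl).elim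

/-- if every one of `v` is independent from every one of `u`
(coordinates `a`, `b` are independent when `b ∉ {a, π(a), τ(a)}`), with the
single exception `v_{i₀} = u_{π(i₀)} = 1` where `π(i₀) ≠ i₀`,
`τ(i₀) ≠ π(i₀)` and `v_{π(i₀)} = 0`, then `v *_τ u = v + u` while `v *_π u`
differs from `v + u` exactly in the coordinates `i₀` and `π(i₀)`; in
particular the Hamming distance between `v *_π u` and `v *_τ u` is 2. -/
theorem star_indep_config {n : ℕ} (π τ : Fin n → Fin n)
    (hπ : Function.Involutive π) (hτ : Function.Involutive τ)
    (v u : Fin n → ZMod 2) (i₀ : Fin n)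
    (h1 : π i₀ ≠ i₀) (h2 : τ i₀ ≠ π i₀)
    (hv : v i₀ = 1) (hu : u (π i₀) = 1) (hvπ : v (π i₀) = 0)
    (hindep : ∀ a b, v a = 1 → u b = 1 →
      (a = i₀ ∧ b = π i₀) ∨ (b ≠ a ∧ b ≠ π a ∧ b ≠ τ a)) :
    star τ v u = v + u ∧
    star π v u = v + u + Pi.single i₀ 1 + Pi.single (π i₀) 1 ∧
    hammingDist (star π v u) (star τ v u) = 2 := by
  have h02 : ∀ x : ZMod 2, x = 0 ∨ x = 1 := by decide
  -- τ correction vanishes everywhere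
  have hcτ : ∀ j, (v j + v (τ j)) * (u j + u (τ j)) = 0 := by
    intro j
    apply star_aux τ hτ v u j
    intro a b _ _ hva hub
    rcases hindep a b hva hub with ⟨ha, hb⟩ | ⟨x, _, z⟩
    · subst ha; subst hb; exact ⟨h1, h2.symm⟩
    · exact ⟨x, z⟩
  have hstarτ : star τ v u = v + u := by
    funext j
    have e : star τ v u j = v j + u j + (v j + v (τ j)) * (u j + u (τ j)) := rfl
    rw [Pi.add_apply, e, hcτ j, add_zero]
  -- u i₀ = 0
  have hu0 : u i₀ = 0 := by
    rcases h02 (u i₀) with h' | h'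
    · exact h'
    · rcases hindep i₀ i₀ hv h' with ⟨_, hb⟩ | ⟨hb, _, _⟩
      · exact absurd hb.symm h1
      · exact absurd rfl hb
  -- π correction vanishes off {i₀, π i₀}
  have hcπ : ∀ j, j ≠ i₀ → j ≠ π i₀ → (v j + v (π j)) * (u j + u (π j)) = 0 := by
    intro j hj1 hj2
    apply star_aux π hπ v u j
    intro a b ha _ hva hub
    rcases hindep a b hva hub with ⟨ha', _⟩ | ⟨x, y, _⟩
    · exfalso
      rcases ha with rfl | rfl
      · exact hj1 ha'
      · exact hj2 (by rw [← ha', hπ j])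
    · exact ⟨x, y⟩
  have hstarπ : star π v u = v + u + Pi.single i₀ 1 + Pi.single (π i₀) 1 := by
    funext j
    have e : star π v u j = v j + u j + (v j + v (π j)) * (u j + u (π j)) := rfl
    simp only [Pi.add_apply]
    rw [e]
    by_cases hj1 : j = i₀
    · subst hj1
      rw [hv, hvπ, hu0, hu, Pi.single_eq_same, Pi.single_eq_of_ne h1.symm]
      decide
    · by_cases hj2 : j = π i₀
      · subst hj2
        rw [hvπ, hπ i₀, hv, hu, hu0,
          Pi.single_eq_of_ne (hj1 : π i₀ ≠ i₀), Pi.single_eq_same]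
        decide
      · rw [hcπ j hj1 hj2, Pi.single_eq_of_ne hj1, Pi.single_eq_of_ne hj2]
        ring
  refine ⟨hstarτ, hstarπ, ?_⟩
  have hdiff : ∀ j, star π v u j ≠ star τ v u j ↔ (j = i₀ ∨ j = π i₀) := by
    intro j
    rw [hstarτ, hstarπ]
    simp only [Pi.add_apply]
    constructor
    · intro hne
      by_contra hc
      push_neg at hc
      rw [Pi.single_eq_of_ne hc.1, Pi.single_eq_of_ne hc.2] at hne
      simp at hne
    · rintro (h | h)
      · rw [h, Pi.single_eq_same, Pi.single_eq_of_ne (h1.symm : i₀ ≠ π i₀)]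
        simp
      · rw [h, Pi.single_eq_of_ne (h1 : π i₀ ≠ i₀), Pi.single_eq_same]
        simp
  unfold hammingDist
  have : (Finset.univ.filter fun j => star π v u j ≠ star τ v u j) = {i₀, π i₀} := by
    ext j
    simp [hdiff j]
  rw [this, Finset.card_insert_of_notMem (by simp [h1.symm]), Finset.card_singleton]
end

section
/- Let C ⊆ {0,1}^n be a code with minimum Hamming distance at least 4 that is closed under both *_π and *_τ for involutions π, τ of {0,...,n-1}. Suppose there exist v, u ∈ C and a coordinate i with π(i) ≠ i, π(i) ≠ τ(i), v_i = u_{π(i)} = 1, such that every other coordinate where v is nonzero is independent (j' ∉ {j, π(j), τ(j)}) from every other coordinate where u is nonzero, and such that v *_τ u = v + u while v *_π u = v + u + e_i + e_{π(i)}. Then we reach a contradiction; hence no such configuration exists in C. -/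
/-- in a code `C` of minimum distance at least 4 closed under
both `*_π` and `*_τ`, there is no pair of codewords `v, u` and coordinate `i`
with `π(i) ≠ i`, `π(i) ≠ τ(i)`, `v_i = u_{π(i)} = 1`, all other ones of `v`
independent from all other ones of `u`, such that `v *_τ u = v + u` while
`v *_π u = v + u + e_i + e_{π(i)}`: such a configuration yields a
contradiction. -/
theorem no_config_in_distance4_code {n : ℕ} (π τ : Fin n → Fin n)
    (hπ : Function.Involutive π) (hτ : Function.Involutive τ)
    (C : Set (Fin n → ZMod 2))
    (hd : ∀ x ∈ C, ∀ y ∈ C, x ≠ y → 4 ≤ hammingDist x y)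
    (hCπ : ∀ x ∈ C, ∀ y ∈ C, star π x y ∈ C)
    (hCτ : ∀ x ∈ C, ∀ y ∈ C, star τ x y ∈ C)
    (v u : Fin n → ZMod 2) (hvC : v ∈ C) (huC : u ∈ C) (i : Fin n)
    (h1 : π i ≠ i) (h2 : π i ≠ τ i)
    (hv : v i = 1) (hu : u (π i) = 1)
    (hindep : ∀ a b, v a = 1 → u b = 1 →
      (a = i ∧ b = π i) ∨ (b ≠ a ∧ b ≠ π a ∧ b ≠ τ a))
    (heq1 : star τ v u = v + u)
    (heq2 : star π v u = v + u + Pi.single i 1 + Pi.single (π i) 1) :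
    False := by
  have hA : (v + u) ∈ C := heq1 ▸ hCτ v hvC u huC
  have hB : (v + u + Pi.single i 1 + Pi.single (π i) 1) ∈ C := heq2 ▸ hCπ v hvC u huC
  have hne : (v + u) ≠ (v + u + Pi.single i 1 + Pi.single (π i) 1) := by
    intro h
    have := congrFun h i
    simp [Pi.single_apply, h1.symm, h1] at this
  have h4 := hd _ hA _ hB hne
  have hle : hammingDist (v + u) (v + u + Pi.single i 1 + Pi.single (π i) 1) ≤ 2 := by
    have : hammingDist (v + u) (v + u + Pi.single i 1 + Pi.single (π i) 1)
        ≤ ({i, π i} : Finset (Fin n)).card := by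
      apply Finset.card_le_card
      intro j hj
      simp only [hammingDist, Finset.mem_filter, Finset.mem_univ, true_and] at hj
      simp only [Finset.mem_insert, Finset.mem_singleton]
      by_contra hc
      push_neg at hc
      apply hj
      simp [Pi.single_apply, hc.1, hc.2, Ne.symm hc.1, Ne.symm hc.2]
    calc hammingDist (v + u) (v + u + Pi.single i 1 + Pi.single (π i) 1)
        ≤ ({i, π i} : Finset (Fin n)).card := this
      _ ≤ 2 := Finset.card_insert_le _ _ |>.trans (by simp)
  omega
end
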